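/- Cube formula: Let α > 0 and let g : ℝ → ℝ be continuous on [0,α]. Then (∫₀^α g(x) dx)³ = 6 · ∫₀¹ ∫₀¹ ∫₀^α γ² · β · g(γ) · g(γ·β) · g(γ·β·x) dγ dβ dx. -/

import Mathlib

/-!
Write `G t = ∫₀^t g`. Reversing the order of integration, the innermost `x`-integral is
`∫₀¹ (γβ) g(γβx) dx = G(γβ)`, the substitution `v = γβ` turns the `β`-integral into
`∫₀^γ g G = G(γ)²/2`, and finally `∫₀^α g G²/2 = G(α)³/6`. Continuity on all of `ℝ`, needed for
Fubini, is arranged by composing `g` with the projection onto `[0, α]`, which does not change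
any value of `g` that occurs.
-/

open Set MeasureTheory intervalIntegral

section Fubini

variable {E : Type*} [NormedAddCommGroup E] [NormedSpace ℝ E]

theorem intervalIntegral_intervalIntegral_swap_of_continuous {F : ℝ → ℝ → E}
    (hF : Continuous F.uncurry) (a b c d : ℝ) :
    ∫ x in a..b, ∫ y in c..d, F x y = ∫ y in c..d, ∫ x in a..b, F x y :=
  intervalIntegral_intervalIntegral_swap <|
    (hF.continuousOn.integrableOn_compact (isCompact_uIcc.prod isCompact_uIcc)).mono_set
      (prod_mono uIoc_subset_uIcc uIoc_subset_uIcc)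

theorem intervalIntegral_triple_reverse_of_continuous {F : ℝ → ℝ → ℝ → E}
    (hF : Continuous fun p : ℝ × ℝ × ℝ => F p.1 p.2.1 p.2.2) (a b c d e f : ℝ) :
    ∫ x in a..b, ∫ y in c..d, ∫ z in e..f, F x y z
      = ∫ z in e..f, ∫ y in c..d, ∫ x in a..b, F x y z := by
  have hF₂ (y : ℝ) : Continuous (Function.uncurry fun x z => F x y z) := by fun_prop
  calc ∫ x in a..b, ∫ y in c..d, ∫ z in e..f, F x y z
      = ∫ y in c..d, ∫ x in a..b, ∫ z in e..f, F x y z :=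
        intervalIntegral_intervalIntegral_swap_of_continuous
          (continuous_parametric_intervalIntegral_of_continuous' (by fun_prop) e f) a b c d
    _ = ∫ y in c..d, ∫ z in e..f, ∫ x in a..b, F x y z := by
        congr 1
        funext y
        exact intervalIntegral_intervalIntegral_swap_of_continuous (hF₂ y) a b e f
    _ = ∫ z in e..f, ∫ y in c..d, ∫ x in a..b, F x y z :=
        intervalIntegral_intervalIntegral_swap_of_continuous
          (continuous_parametric_intervalIntegral_of_continuous' (by fun_prop) a b) c d e f

end Fubini

theorem integral_zero_one_mul_comp_mul (f : ℝ → ℝ) (c : ℝ) :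
    ∫ x in (0:ℝ)..1, c * f (c * x) = ∫ x in (0:ℝ)..c, f x := by
  rw [intervalIntegral.integral_const_mul, ← smul_eq_mul, smul_integral_comp_mul_left, mul_zero,
    mul_one]

theorem integral_mul_primitive_pow {g : ℝ → ℝ} (hg : Continuous g) (n : ℕ) (t : ℝ) :
    ∫ v in (0:ℝ)..t, g v * (∫ s in (0:ℝ)..v, g s) ^ n
      = (∫ s in (0:ℝ)..t, g s) ^ (n + 1) / (n + 1) := by
  have h := integral_comp_mul_deriv (g := (· ^ n))
    (fun v _ => (hg.integral_hasStrictDerivAt 0 v).hasDerivAt) hg.continuousOn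
    (continuous_pow n) (a := 0) (b := t)
  simp only [Function.comp_apply, integral_same, integral_pow] at h
  simpa [mul_comm] using h

theorem cube_formula_of_continuous (α : ℝ) {g : ℝ → ℝ} (hg : Continuous g) :
    (∫ x in (0:ℝ)..α, g x) ^ 3
      = 6 * ∫ x in (0:ℝ)..1, ∫ β in (0:ℝ)..1, ∫ γ in (0:ℝ)..α,
          γ ^ 2 * β * g γ * g (γ * β) * g (γ * β * x) := by
  set G : ℝ → ℝ := fun t => ∫ s in (0:ℝ)..t, g s
  have hG_pow (n : ℕ) (t : ℝ) : ∫ v in (0:ℝ)..t, g v * G v ^ n = G t ^ (n + 1) / (n + 1) :=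
    integral_mul_primitive_pow hg n t
  have inner (γ β : ℝ) : ∫ x in (0:ℝ)..1, γ ^ 2 * β * g γ * g (γ * β) * g (γ * β * x)
      = g γ * γ * (g (γ * β) * G (γ * β)) := by
    rw [show G (γ * β) = _ from (integral_zero_one_mul_comp_mul g (γ * β)).symm,
      ← intervalIntegral.integral_const_mul, ← intervalIntegral.integral_const_mul]
    congr 1
    funext x
    ring
  have middle (γ : ℝ) : ∫ β in (0:ℝ)..1, g γ * γ * (g (γ * β) * G (γ * β))
      = g γ * (G γ ^ 2 / 2) := by
    rw [intervalIntegral.integral_const_mul, mul_assoc, ← intervalIntegral.integral_const_mul,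
      integral_zero_one_mul_comp_mul (fun v => g v * G v)]
    congr 1
    simpa [one_add_one_eq_two] using hG_pow 1 γ
  have outer : ∫ γ in (0:ℝ)..α, g γ * (G γ ^ 2 / 2) = G α ^ 3 / 6 := by
    simp_rw [← mul_div_assoc, intervalIntegral.integral_div, hG_pow 2]
    ring
  rw [intervalIntegral_triple_reverse_of_continuous (by fun_prop)]
  simp only [inner, middle, outer]
  ring

theorem cube_formula (α : ℝ) (hα : 0 < α) (g : ℝ → ℝ)
    (hg : ContinuousOn g (Set.Icc 0 α)) :
    (∫ x in (0:ℝ)..α, g x) ^ 3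
      = 6 * ∫ x in (0:ℝ)..1, ∫ β in (0:ℝ)..1, ∫ γ in (0:ℝ)..α,
          γ ^ 2 * β * g γ * g (γ * β) * g (γ * β * x) := by
  set ĝ : ℝ → ℝ := fun t => g (projIcc 0 α hα.le t)
  have hĝ : Continuous ĝ :=
    hg.comp_continuous (continuous_subtype_val.comp continuous_projIcc) fun t =>
      (projIcc 0 α hα.le t).2
  have hĝg : EqOn ĝ g (Icc 0 α) := fun t ht => by simp [ĝ, projIcc_of_mem hα.le ht]
  have hmul {γ β : ℝ} (hγ : γ ∈ Icc 0 α) (hβ : β ∈ Icc (0:ℝ) 1) : γ * β ∈ Icc 0 α :=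
    ⟨mul_nonneg hγ.1 hβ.1, (mul_le_of_le_one_right hγ.1 hβ.2).trans hγ.2⟩
  have hĝg' : EqOn ĝ g (uIcc 0 α) := uIcc_of_le hα.le ▸ hĝg
  rw [integral_congr hĝg'.symm, cube_formula_of_continuous α hĝ]
  congr 1
  refine integral_congr fun x hx => integral_congr fun β hβ => integral_congr fun γ hγ => ?_
  rw [uIcc_of_le zero_le_one] at hx hβ
  rw [uIcc_of_le hα.le] at hγ
  simp only [hĝg hγ, hĝg (hmul hγ hβ), hĝg (hmul (hmul hγ hβ) hx)]
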